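/- Harmonic truncation by induction: define p(n) = n+1 if n is even and p(n) = n if n is odd. Suppose a family (u_{n,p}) satisfies: u_{n,p} = 0 for |p| > p(n) when n ∈ {0,1,2}, and for each k, u_{k+2,p} is determined by L_p u_{k+2,p} = f_{k,p} whenever |p| ≥ p(k+2)+1 (with the other terms vanishing), where f_{k,p} = λΣ_{n₁+n₂+n₃=k}Σ_{p₁+p₂+p₃=p} u_{n₁,p₁}u_{n₂,p₂}u_{n₃,p₃} and L_p is invertible for |p| ≥ 2. Then u_{n,p} = 0 for all n and all |p| ≥ p(n)+1. In particular the combinatorial lemma holds: if |pᵢ| ≤ p(nᵢ) for i=1,2,3 and n₁+n₂+n₃ = k with at least one nᵢ odd (resp. all parities matching k), then |p₁+p₂+p₃| ≤ k+2 when k+2 is odd. -/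

import Mathlib

/-!
Strong induction on the order `n`: for `|p| > p(k+2)`, `L_p u_{k+2,p}` equals the cubic
convolution of lower orders, whose terms vanish because `p(n₁) + p(n₂) + p(n₃) ≤ p(k+2)`
whenever `n₁ + n₂ + n₃ = k`; since `p(k+2) ≥ 2`, `L_p` is invertible there.
-/

open Finset

def pbound (n : ℕ) : ℕ := if Even n then n + 1 else n

lemma le_pbound (n : ℕ) : n ≤ pbound n := by
  unfold pbound
  split_ifs <;> omega

-- An excess of 3 over `a + b + c` needs `a`, `b`, `c` all even, and then `a + b + c + 2` is even.
lemma pbound_add_add_le (a b c : ℕ) :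
    pbound a + pbound b + pbound c ≤ pbound (a + b + c + 2) := by
  simp only [pbound, Nat.even_iff]
  split_ifs <;> omega

lemma mul_mul_eq_zero_of_lt_abs {R : Type*} [MulZeroClass R] {v₁ v₂ v₃ : ℤ → R}
    {N₁ N₂ N₃ : ℤ} (h₁ : ∀ q, N₁ < |q| → v₁ q = 0) (h₂ : ∀ q, N₂ < |q| → v₂ q = 0)
    (h₃ : ∀ q, N₃ < |q| → v₃ q = 0) {p : ℤ} (hp : N₁ + N₂ + N₃ < |p|) (p₁ p₂ : ℤ) :
    v₁ p₁ * v₂ p₂ * v₃ (p - p₁ - p₂) = 0 := by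
  by_cases hp₁ : N₁ < |p₁|
  · rw [h₁ p₁ hp₁, zero_mul, zero_mul]
  by_cases hp₂ : N₂ < |p₂|
  · rw [h₂ p₂ hp₂, mul_zero, zero_mul]
  have hp₃ : N₃ < |p - p₁ - p₂| := by
    have h : |p| ≤ |p - p₁ - p₂| + |p₁| + |p₂| := by
      calc |p| = |(p - p₁ - p₂) + p₁ + p₂| := by ring_nf
        _ ≤ |p - p₁ - p₂| + |p₁| + |p₂| := abs_add_three _ _ _
    linarith
  rw [h₃ _ hp₃, mul_zero]

lemma sum_cubic_eq_zero_of_lt_abs {R : Type*} [Semiring R] {u : ℕ → ℤ →₀ R} {k : ℕ}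
    (hu : ∀ n ≤ k, ∀ q : ℤ, (pbound n : ℤ) < |q| → u n q = 0) {p : ℤ}
    (hp : (pbound (k + 2) : ℤ) < |p|) :
    ∑ c ∈ ((range (k + 1)) ×ˢ (range (k + 1))).filter (fun c => c.1 + c.2 ≤ k),
      ∑ p1 ∈ (u c.1).support, ∑ p2 ∈ (u c.2).support,
        u c.1 p1 * u c.2 p2 * u (k - c.1 - c.2) (p - p1 - p2) = 0 := by
  refine sum_eq_zero fun c hc => sum_eq_zero fun p₁ _ => sum_eq_zero fun p₂ _ => ?_
  have hck : c.1 + c.2 ≤ k := (mem_filter.mp hc).2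
  have hbound : (pbound c.1 + pbound c.2 + pbound (k - c.1 - c.2) : ℤ) < |p| := by
    have h := pbound_add_add_le c.1 c.2 (k - c.1 - c.2)
    rw [show c.1 + c.2 + (k - c.1 - c.2) = k by omega] at h
    exact lt_of_le_of_lt (by exact_mod_cast h) hp
  exact mul_mul_eq_zero_of_lt_abs (hu _ (by omega)) (hu _ (by omega)) (hu _ (by omega))
    hbound p₁ p₂

/-- Harmonic truncation by induction.  Suppose the amplitudes `u_{n,·}` (finitely
supported families of complex numbers) satisfy `u_{n,p} = 0` for `|p| > p(n)` when
`n ∈ {0,1,2}`, and for each `k` and each `|p| ≥ p(k+2)+1` the amplitude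
`u_{k+2,p}` is determined by `L_p u_{k+2,p} = f_{k,p}` (the other terms in the
`O(ε^k)` equation vanishing), where
`f_{k,p} = λ Σ_{n₁+n₂+n₃=k} Σ_{p₁+p₂+p₃=p} u_{n₁,p₁}u_{n₂,p₂}u_{n₃,p₃}`
and `L_p` is invertible (nonvanishing) for `|p| ≥ 2`.  Then `u_{n,p} = 0` for
all `n` and all `|p| ≥ p(n)+1`.  In particular the combinatorial lemma holds:
for `n₁+n₂+n₃ = k` odd with `n₁` odd, bounds `|p₁| ≤ n₁`, `|p₂| ≤ n₂+1`,
`|p₃| ≤ n₃+1` give `|p₁+p₂+p₃| ≤ k+2`. -/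
theorem stmt9 (lam : ℂ) (L : ℤ → ℂ) (hL : ∀ p : ℤ, 2 ≤ |p| → L p ≠ 0)
    (u : ℕ → (ℤ →₀ ℂ))
    (f : ℕ → ℤ → ℂ)
    (hf : ∀ k : ℕ, ∀ p : ℤ, f k p =
      lam * ∑ c ∈ ((Finset.range (k+1)) ×ˢ (Finset.range (k+1))).filter
          (fun c => c.1 + c.2 ≤ k),
        ∑ p1 ∈ (u c.1).support, ∑ p2 ∈ (u c.2).support,
          u c.1 p1 * u c.2 p2 * u (k - c.1 - c.2) (p - p1 - p2))
    (hbase : ∀ n ≤ 2, ∀ p : ℤ, (pbound n : ℤ) < |p| → u n p = 0)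
    (hind : ∀ k : ℕ, ∀ p : ℤ, (pbound (k+2) : ℤ) + 1 ≤ |p| →
      L p * u (k+2) p = f k p) :
    (∀ n : ℕ, ∀ p : ℤ, (pbound n : ℤ) + 1 ≤ |p| → u n p = 0) ∧
    (∀ k n1 n2 n3 : ℕ, Odd k → n1 + n2 + n3 = k → Odd n1 →
      ∀ p1 p2 p3 : ℤ, |p1| ≤ (n1 : ℤ) → |p2| ≤ (n2 : ℤ) + 1 → |p3| ≤ (n3 : ℤ) + 1 →
        |p1 + p2 + p3| ≤ (k : ℤ) + 2) := by
  have hsupp : ∀ n, ∀ p : ℤ, (pbound n : ℤ) < |p| → u n p = 0 := by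
    intro n
    induction n using Nat.strong_induction_on with
    | _ n ih =>
      intro p hp
      rcases le_or_gt n 2 with hn | hn
      · exact hbase n hn p hp
      obtain ⟨k, rfl⟩ : ∃ k, n = k + 2 := ⟨n - 2, by omega⟩
      have hfk : f k p = 0 := by
        rw [hf, sum_cubic_eq_zero_of_lt_abs (fun m hm => ih m (by omega)) hp, mul_zero]
      have hLp : L p ≠ 0 := hL p (by have := le_pbound (k + 2); linarith)
      exact (mul_eq_zero.mp ((hind k p hp).trans hfk)).resolve_left hLp
  refine ⟨hsupp, ?_⟩
  intro k n1 n2 n3 _ hk _ p1 p2 p3 h1 h2 h3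
  have hk' : (n1 + n2 + n3 : ℤ) = k := by exact_mod_cast hk
  linarith [abs_add_three p1 p2 p3]
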